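/- arXiv:2505.14985 — 2 statements merged into one kernel-verified Lean document; each statement's English description precedes it below -/
import Mathlib

section
/- Let Z be an n×p real matrix such that ZᵀZ is invertible, let H = Z(ZᵀZ)⁻¹Zᵀ, and let D be the diagonal matrix with D_ii = H_ii. Assume H_ii ≠ 1 for all i. For each i, let Z_(i) and y_(i) denote Z and y ∈ ℝⁿ with the i-th row/entry removed, and assume Z_(i)ᵀZ_(i) is invertible. Then for every i, the leave-one-out prediction z_iᵀ(Z_(i)ᵀZ_(i))⁻¹Z_(i)ᵀy_(i) equals the i-th entry of (I−D)⁻¹(H−D)y. -/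
/-!
Deleting row `i` turns `ZᵀZ` into `A - z zᵀ` and `Zᵀy` into `Zᵀy - yᵢ z`, where `A = ZᵀZ` and
`z = zᵢ`. Applying `A⁻¹` to the normal equations `(A - z zᵀ) β = Zᵀy - yᵢ z` of the deleted
problem gives `β = A⁻¹Zᵀy - yᵢ A⁻¹z + (zᵀβ) A⁻¹z`, and taking the inner product with `z` gives
`(1 - Hᵢᵢ) zᵀβ = (Hy)ᵢ - Hᵢᵢ yᵢ`, which is the `i`-th entry of `(I - D)⁻¹(H - D)y`.
-/

open Matrix

section RowDeletion

variable {ι κ R : Type*} [Fintype ι] [DecidableEq ι] [CommRing R]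

def deleteRow (Z : Matrix ι κ R) (i : ι) : Matrix {j // j ≠ i} κ R :=
  Z.submatrix Subtype.val id

theorem transpose_deleteRow_mul_deleteRow (Z : Matrix ι κ R) (i : ι) :
    (deleteRow Z i)ᵀ * deleteRow Z i = Zᵀ * Z - vecMulVec (Z i) (Z i) := by
  ext k l
  rw [Matrix.sub_apply, mul_apply, mul_apply, Fintype.sum_eq_add_sum_subtype_ne _ i]
  simp [deleteRow, vecMulVec_apply]

theorem transpose_deleteRow_mulVec (Z : Matrix ι κ R) (y : ι → R) (i : ι) :
    (deleteRow Z i)ᵀ *ᵥ (fun j => y j.1) = Zᵀ *ᵥ y - y i • Z i := by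
  ext k
  rw [Pi.sub_apply, mulVec, mulVec, dotProduct, dotProduct,
    Fintype.sum_eq_add_sum_subtype_ne _ i]
  simp [deleteRow, mul_comm]

end RowDeletion

theorem one_sub_mul_dotProduct_eq_of_sub_vecMulVec_mulVec_eq {κ R : Type*} [Fintype κ]
    [DecidableEq κ] [CommRing R] {A : Matrix κ κ R} (hA : IsUnit A.det) {z c β : κ → R} {t : R}
    (hβ : (A - vecMulVec z z) *ᵥ β = c - t • z) :
    (1 - z ⬝ᵥ (A⁻¹ *ᵥ z)) * (z ⬝ᵥ β) = z ⬝ᵥ (A⁻¹ *ᵥ c) - t * z ⬝ᵥ (A⁻¹ *ᵥ z) := by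
  have hsolve : β - (z ⬝ᵥ β) • A⁻¹ *ᵥ z = A⁻¹ *ᵥ c - t • A⁻¹ *ᵥ z := by
    simpa only [sub_mulVec, mulVec_sub, mulVec_mulVec, nonsing_inv_mul _ hA, one_mulVec,
      vecMulVec_mulVec, op_smul_eq_smul, mulVec_smul] using congrArg (A⁻¹ *ᵥ ·) hβ
  have hdot := congrArg (z ⬝ᵥ ·) hsolve
  simp only [dotProduct_sub, dotProduct_smul, smul_eq_mul] at hdot
  linear_combination hdot

section HatMatrix

variable {ι κ R : Type*} [Fintype κ] [CommRing R]

theorem mul_mul_transpose_apply_self (Z : Matrix ι κ R) (M : Matrix κ κ R) (i : ι) :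
    (Z * M * Zᵀ) i i = Z i ⬝ᵥ (M *ᵥ Z i) := by
  rw [Matrix.mul_assoc, mul_apply']
  rfl

theorem mul_mul_transpose_mulVec_apply [Fintype ι] (Z : Matrix ι κ R) (M : Matrix κ κ R)
    (y : ι → R) (i : ι) :
    ((Z * M * Zᵀ) *ᵥ y) i = Z i ⬝ᵥ (M *ᵥ (Zᵀ *ᵥ y)) := by
  rw [← mulVec_mulVec, ← mulVec_mulVec]
  rfl

end HatMatrix

theorem inv_one_sub_diagonal_mul_sub_diagonal_mulVec_apply {ι K : Type*} [Fintype ι]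
    [DecidableEq ι] [Field K] (H : Matrix ι ι K) {d : ι → K} (hd : ∀ j, d j ≠ 1)
    (y : ι → K) (i : ι) :
    (((1 - diagonal d)⁻¹ * (H - diagonal d)) *ᵥ y) i = ((H *ᵥ y) i - d i * y i) / (1 - d i) := by
  have hinv : (1 - diagonal d)⁻¹ = diagonal fun j => (1 - d j)⁻¹ := by
    rw [← diagonal_one, diagonal_sub]
    refine inv_eq_left_inv ?_
    rw [diagonal_mul_diagonal, ← diagonal_one]
    congr 1
    funext j
    exact inv_mul_cancel₀ (sub_ne_zero.mpr (hd j).symm)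
  rw [hinv, ← mulVec_mulVec, mulVec_diagonal, sub_mulVec, Pi.sub_apply, mulVec_diagonal,
    div_eq_inv_mul]

/-- The leave-one-out least squares prediction equals the `i`-th entry of
`(I - D)⁻¹ (H - D) y`, where `H = Z(ZᵀZ)⁻¹Zᵀ` and `D = diag(H₁₁,…,Hₙₙ)`. -/
theorem loo_prediction_eq
    (n p : ℕ) (Z : Matrix (Fin n) (Fin p) ℝ) (y : Fin n → ℝ)
    (hZ : IsUnit (Zᵀ * Z).det)
    (H : Matrix (Fin n) (Fin n) ℝ) (hH : H = Z * (Zᵀ * Z)⁻¹ * Zᵀ)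
    (D : Matrix (Fin n) (Fin n) ℝ) (hD : D = Matrix.diagonal fun i => H i i)
    (hdiag : ∀ i, H i i ≠ 1)
    (Zd : ∀ i : Fin n, Matrix {j : Fin n // j ≠ i} (Fin p) ℝ)
    (hZd : ∀ i, Zd i = Matrix.of fun j k => Z j.1 k)
    (yd : ∀ i : Fin n, {j : Fin n // j ≠ i} → ℝ)
    (hyd : ∀ i, yd i = fun j => y j.1)
    (hZdi : ∀ i, IsUnit ((Zd i)ᵀ * Zd i).det) :
    ∀ i : Fin n,
      (fun k => Z i k) ⬝ᵥ (((Zd i)ᵀ * Zd i)⁻¹ *ᵥ ((Zd i)ᵀ *ᵥ yd i))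
        = (((1 - D)⁻¹ * (H - D)) *ᵥ y) i := by
  intro i
  have hZi : Zd i = deleteRow Z i := hZd i
  have hnormal : (Zᵀ * Z - vecMulVec (Z i) (Z i)) *ᵥ (((Zd i)ᵀ * Zd i)⁻¹ *ᵥ ((Zd i)ᵀ *ᵥ yd i))
      = Zᵀ *ᵥ y - y i • Z i := by
    rw [mulVec_mulVec, ← transpose_deleteRow_mul_deleteRow, ← hZi,
      mul_nonsing_inv _ (hZdi i), one_mulVec, hZi, hyd, transpose_deleteRow_mulVec]
  have hkey := one_sub_mul_dotProduct_eq_of_sub_vecMulVec_mulVec_eq hZ hnormal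
  rw [← mul_mul_transpose_apply_self, ← mul_mul_transpose_mulVec_apply, ← hH] at hkey
  have hne : 1 - H i i ≠ 0 := sub_ne_zero.mpr (hdiag i).symm
  rw [hD, inv_one_sub_diagonal_mul_sub_diagonal_mulVec_apply H hdiag, eq_div_iff hne]
  linear_combination hkey
end

section
/- For the ordinary least squares fit with hat matrix H = Z(ZᵀZ)⁻¹Zᵀ, the leave-one-out residual satisfies y_i − y_PV,i = (y_i − ŷ_i)/(1 − H_ii), equivalently y_PV,i = (ŷ_i − H_ii y_i)/(1 − H_ii), where ŷ = Hy is the full-data fit and y_PV,i = z_i(Z_(i)ᵀZ_(i))⁻¹Z_(i)ᵀy_(i) is the leave-one-out prediction. -/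
open Matrix

/-- Leave-one-out residual identity for OLS: `yᵢ − y_PV,i = (yᵢ − ŷᵢ)/(1 − Hᵢᵢ)`,
equivalently `y_PV,i = (ŷᵢ − Hᵢᵢ yᵢ)/(1 − Hᵢᵢ)`. -/
theorem loo_residual_identity
    (n p : ℕ) (Z : Matrix (Fin n) (Fin p) ℝ) (y : Fin n → ℝ)
    (hZ : IsUnit (Zᵀ * Z).det)
    (H : Matrix (Fin n) (Fin n) ℝ) (hH : H = Z * (Zᵀ * Z)⁻¹ * Zᵀ)
    (hdiag : ∀ i, H i i ≠ 1)
    (yhat : Fin n → ℝ) (hyhat : yhat = H *ᵥ y)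
    (Zd : ∀ i : Fin n, Matrix {j : Fin n // j ≠ i} (Fin p) ℝ)
    (hZd : ∀ i, Zd i = Matrix.of fun j k => Z j.1 k)
    (hZdi : ∀ i, IsUnit ((Zd i)ᵀ * Zd i).det)
    (yPV : Fin n → ℝ)
    (hyPV : yPV = fun i =>
      (fun k => Z i k) ⬝ᵥ (((Zd i)ᵀ * Zd i)⁻¹ *ᵥ ((Zd i)ᵀ *ᵥ fun j => y j.1))) :
    ∀ i : Fin n,
      y i - yPV i = (y i - yhat i) / (1 - H i i) ∧
      yPV i = (yhat i - H i i * y i) / (1 - H i i) := by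
  intro i
  set z : Fin p → ℝ := fun k => Z i k with hz
  set A : Matrix (Fin p) (Fin p) ℝ := Zᵀ * Z with hA
  set Ai : Matrix (Fin p) (Fin p) ℝ := (Zd i)ᵀ * Zd i with hAi
  set v : Fin p → ℝ := Zᵀ *ᵥ y with hv
  set b : Fin p → ℝ := Ai⁻¹ *ᵥ ((Zd i)ᵀ *ᵥ fun j => y j.1) with hb
  have hsub : ∀ f : Fin n → ℝ, ∑ j : {j : Fin n // j ≠ i}, f j.1
      = (∑ j, f j) - f i := by
    intro f
    rw [← Finset.sum_subtype (Finset.univ.erase i) (by simp) f,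
      eq_sub_iff_add_eq, add_comm, Finset.add_sum_erase _ _ (Finset.mem_univ i)]
  -- Ai = A - z zᵀ
  have hAi_eq : Ai = A - vecMulVec z z := by
    ext k l
    simp only [hAi, hA, Matrix.mul_apply, Matrix.sub_apply, vecMulVec_apply,
      transpose_apply, hZd, Matrix.of_apply, hz]
    exact hsub fun j => Z j k * Z j l
  -- Zdᵀ y_(i) = v - yᵢ • z
  have hw : ((Zd i)ᵀ *ᵥ fun j => y j.1) = v - y i • z := by
    ext k
    simp only [mulVec, dotProduct, transpose_apply, hZd, Matrix.of_apply, hv,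
      Pi.sub_apply, Pi.smul_apply, smul_eq_mul, hz]
    rw [hsub fun j => Z j k * y j]
    ring
  -- Ai b = v - yᵢ • z
  have h3 : Ai *ᵥ b = v - y i • z := by
    rw [hb, mulVec_mulVec, Matrix.mul_nonsing_inv _ (hZdi i), one_mulVec, hw]
  -- (z zᵀ) b = (z ⬝ᵥ b) • z
  have h4 : vecMulVec z z *ᵥ b = (z ⬝ᵥ b) • z := by
    ext k
    simp only [mulVec, dotProduct, vecMulVec_apply, Pi.smul_apply, smul_eq_mul,
      Finset.sum_mul, Finset.mul_sum]
    exact Finset.sum_congr rfl fun j _ => by ring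
  -- A b = v - (yᵢ - z⬝ᵥb) • z
  have h5 : A *ᵥ b = v - (y i - z ⬝ᵥ b) • z := by
    have : A = Ai + vecMulVec z z := by rw [hAi_eq]; abel
    rw [this, add_mulVec, h3, h4]
    ext k
    simp only [Pi.add_apply, Pi.sub_apply, Pi.smul_apply, smul_eq_mul]
    ring
  -- recover b
  have h6 : b = A⁻¹ *ᵥ v - (y i - z ⬝ᵥ b) • (A⁻¹ *ᵥ z) := by
    have : A⁻¹ *ᵥ (A *ᵥ b) = b := by
      rw [mulVec_mulVec, Matrix.nonsing_inv_mul _ hZ, one_mulVec]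
    conv_lhs => rw [← this, h5]
    rw [mulVec_sub, mulVec_smul]
  -- identify yhat i and H i i
  have hyi : yhat i = z ⬝ᵥ (A⁻¹ *ᵥ v) := by
    rw [hyhat, hH, hv, ← mulVec_mulVec, ← mulVec_mulVec]
    rfl
  have hHi : H i i = z ⬝ᵥ (A⁻¹ *ᵥ z) := by
    rw [hH, Matrix.mul_assoc]
    simp only [Matrix.mul_apply, mulVec, dotProduct, transpose_apply, hz]
  -- main scalar identity
  have hpv : yPV i = z ⬝ᵥ b := by rw [hyPV]
  have key : yPV i = yhat i - (y i - yPV i) * H i i := by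
    have hkey : z ⬝ᵥ b = z ⬝ᵥ (A⁻¹ *ᵥ v) - (y i - z ⬝ᵥ b) * (z ⬝ᵥ (A⁻¹ *ᵥ z)) := by
      conv_lhs => rw [h6]
      rw [dotProduct_sub, dotProduct_smul, smul_eq_mul]
    rw [hpv, hyi, hHi]
    exact hkey
  have hne : 1 - H i i ≠ 0 := fun h => hdiag i (by linarith)
  constructor
  · field_simp
    linarith [key]
  · field_simp
    linarith [key]
end
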